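/- Let A be a complex unital Banach algebra, let (C(t))_{t∈ℝ} be a cosine function in A, and suppose η > 0 is such that for every t with |t| ≤ η one has ‖C(t) − 1_A‖ ≤ 2 and ρ(C(t/2) − 1_A) < 1, where ρ denotes the spectral radius. Define the real sequence (u_n) by u_0 = 2 and u_{n+1} = 1 − √(1 − u_n/2). Then for every n ≥ 1, sup_{|t| ≤ 2^{−n} η} ‖C(t) − 1_A‖ ≤ u_n. -/

import Mathlib

open Filter Topology
open scoped ENNReal NNReal

/-- A cosine function in a unital Banach algebra: `C 0 = 1` and
`C (s+t) + C (s-t) = 2 * C s * C t` for all real `s, t`. -/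
def IsCosineFunction {A : Type*} [NormedRing A] (C : ℝ → A) : Prop :=
  C 0 = 1 ∧ ∀ s t : ℝ, C (s + t) + C (s - t) = 2 * C s * C t

/-!
Write `b = 1 - C t` and `c = C (2 t)`. The doubling formula `C (2 t) + 1 = 2 C(t)²` reads
`2 b - b² = 4 w` with `w = (1 - c) / 8`. When `4 ‖w‖ ≤ 1`, the Catalan generating function gives an
explicit commuting root `g = 2 w ∑ catalan n • wⁿ` of the same equation (the series of
`1 - √(1 - 4 w)`), and its majorant series gives `‖g‖ ≤ 1 - √(1 - 4 ‖w‖)`. As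
`(b - g) (2 - (b + g)) = 0` and `ρ(b + g) ≤ ρ(b) + ‖g‖ < 2`, the second factor is invertible, so
`b = g`. Hence `‖C (2 t) - 1‖ ≤ uₙ` gives `‖C t - 1‖ ≤ uₙ₊₁`, and induction on `n` concludes.
-/

open Finset in
theorem sum_range_sum_antidiagonal_mul_le {f g : ℕ → ℝ} (hf : ∀ n, 0 ≤ f n) (hg : ∀ n, 0 ≤ g n)
    (N : ℕ) :
    ∑ n ∈ range N, ∑ ij ∈ antidiagonal n, f ij.1 * g ij.2 ≤
      (∑ n ∈ range N, f n) * ∑ n ∈ range N, g n := by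
  simp_rw [Nat.sum_antidiagonal_eq_sum_range_succ_mk, sum_range_diag_flip N (fun i j => f i * g j),
    sum_mul_sum]
  gcongr with i _
  · exact fun j _ _ => mul_nonneg (hf i) (hg j)
  · exact Nat.sub_le N i

open Finset in
theorem sum_range_catalan_mul_pow_le {y : ℝ} (hy0 : 0 ≤ y) (hy : 4 * y ≤ 1) (N : ℕ) :
    ∑ n ∈ range N, (catalan n : ℝ) * y ^ n ≤ 2 / (1 + √(1 - 4 * y)) := by
  set s := √(1 - 4 * y)
  have hs0 : 0 ≤ s := Real.sqrt_nonneg _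
  have hs2 : s ^ 2 = 1 - 4 * y := Real.sq_sqrt (by linarith)
  -- `2 / (1 + s)` is the smallest fixed point of `L ↦ 1 + y * L ^ 2`, which bounds the partial sums
  have hfix : 1 + y * (2 / (1 + s)) ^ 2 = 2 / (1 + s) := by
    field_simp
    nlinarith
  induction N with
  | zero => simp only [range_zero, sum_empty]; positivity
  | succ N ih =>
    have hnonneg : ∀ n, 0 ≤ (catalan n : ℝ) * y ^ n := fun n => by positivity
    calc ∑ n ∈ range (N + 1), (catalan n : ℝ) * y ^ n
        = 1 + y * ∑ n ∈ range N, ∑ ij ∈ antidiagonal n,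
            (catalan ij.1 : ℝ) * y ^ ij.1 * ((catalan ij.2 : ℝ) * y ^ ij.2) := by
          rw [sum_range_succ', add_comm, mul_sum]
          congr 1
          · simp
          refine sum_congr rfl fun n _ => ?_
          rw [catalan_succ', Nat.cast_sum, sum_mul, mul_sum]
          refine sum_congr rfl fun ij hij => ?_
          rw [HasAntidiagonal.mem_antidiagonal] at hij
          rw [← hij]
          push_cast
          ring
      _ ≤ 1 + y * (∑ n ∈ range N, (catalan n : ℝ) * y ^ n) ^ 2 := by
          gcongr
          rw [sq]
          exact sum_range_sum_antidiagonal_mul_le hnonneg hnonneg N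
      _ ≤ 1 + y * (2 / (1 + s)) ^ 2 := by gcongr
      _ = 2 / (1 + s) := hfix

theorem summable_catalan_mul_pow {y : ℝ} (hy0 : 0 ≤ y) (hy : 4 * y ≤ 1) :
    Summable fun n => (catalan n : ℝ) * y ^ n :=
  summable_of_sum_range_le (fun n => by positivity) (sum_range_catalan_mul_pow_le hy0 hy)

theorem tsum_catalan_mul_pow_le {y : ℝ} (hy0 : 0 ≤ y) (hy : 4 * y ≤ 1) :
    ∑' n, (catalan n : ℝ) * y ^ n ≤ 2 / (1 + √(1 - 4 * y)) :=
  (summable_catalan_mul_pow hy0 hy).tsum_le_of_sum_range_le (sum_range_catalan_mul_pow_le hy0 hy)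

section CatalanGF

variable {R : Type*} [NormedRing R] {w : R}

/-- The Catalan generating function; `2 * w * catalanGF w` is the series of `1 - √(1 - 4 * w)`. -/
noncomputable def catalanGF (w : R) : R := ∑' n, catalan n • w ^ n

theorem summable_norm_catalan_nsmul_pow [CompleteSpace R] (hw : 4 * ‖w‖ ≤ 1) :
    Summable fun n => ‖catalan n • w ^ n‖ := by
  refine (summable_catalan_mul_pow (norm_nonneg w) hw).of_norm_bounded_eventually_nat ?_
  filter_upwards [eventually_ge_atTop 1] with n hn
  rw [norm_norm]
  exact norm_nsmul_le.trans (by gcongr; exact norm_pow_le' w hn)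

theorem Commute.catalanGF_right {b : R} (h : Commute b w) : Commute b (catalanGF w) :=
  Commute.tsum_right b fun n => (h.pow_right n).smul_right _

theorem catalanGF_eq_one_add_mul_sq [CompleteSpace R] (hw : 4 * ‖w‖ ≤ 1) :
    catalanGF w = 1 + w * catalanGF w ^ 2 := by
  have hs := summable_norm_catalan_nsmul_pow hw
  rw [catalanGF, sq, tsum_mul_tsum_eq_tsum_sum_antidiagonal_of_summable_norm hs hs,
    ← (summable_norm_sum_mul_antidiagonal_of_summable_norm hs hs).of_norm.tsum_mul_left,
    hs.of_norm.tsum_eq_zero_add]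
  congr 1
  · simp
  refine tsum_congr fun n => ?_
  rw [catalan_succ', Finset.sum_smul, Finset.mul_sum]
  refine Finset.sum_congr rfl fun ij hij => ?_
  rw [Finset.HasAntidiagonal.mem_antidiagonal] at hij
  rw [smul_mul_smul_comm, ← pow_add, hij, mul_smul_comm, ← pow_succ']

theorem norm_mul_catalanGF_le [CompleteSpace R] (hw : 4 * ‖w‖ ≤ 1) :
    ‖w * catalanGF w‖ ≤ ‖w‖ * (2 / (1 + √(1 - 4 * ‖w‖))) := by
  have hs := summable_catalan_mul_pow (norm_nonneg w) hw
  rw [catalanGF, ← (summable_norm_catalan_nsmul_pow hw).of_norm.tsum_mul_left]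
  refine (tsum_of_norm_bounded (hs.hasSum.mul_left ‖w‖) fun n => ?_).trans
    (by gcongr; exact tsum_catalan_mul_pow_le (norm_nonneg w) hw)
  rw [mul_smul_comm, ← pow_succ']
  calc ‖catalan n • w ^ (n + 1)‖ ≤ catalan n * ‖w‖ ^ (n + 1) :=
        norm_nsmul_le.trans (by gcongr; exact norm_pow_le' w n.succ_pos)
    _ = ‖w‖ * (catalan n * ‖w‖ ^ n) := by ring

theorem norm_two_mul_mul_catalanGF_le [CompleteSpace R] (hw : 4 * ‖w‖ ≤ 1) :
    ‖2 * w * catalanGF w‖ ≤ 1 - √(1 - 4 * ‖w‖) := by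
  set s := √(1 - 4 * ‖w‖)
  have hs : 4 * ‖w‖ = (1 - s) * (1 + s) := by
    nlinarith [Real.sq_sqrt (by linarith : 0 ≤ 1 - 4 * ‖w‖)]
  calc ‖2 * w * catalanGF w‖ = ‖w * catalanGF w + w * catalanGF w‖ := by rw [mul_assoc, two_mul]
    _ ≤ 2 * ‖w * catalanGF w‖ := (norm_add_le _ _).trans_eq (two_mul _).symm
    _ ≤ 2 * (‖w‖ * (2 / (1 + s))) := by gcongr; exact norm_mul_catalanGF_le hw
    _ = 1 - s := by
      rw [show 2 * (‖w‖ * (2 / (1 + s))) = 4 * ‖w‖ / (1 + s) by ring, hs,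
        mul_div_cancel_right₀ _ (by positivity)]

theorem two_mul_sub_sq_two_mul_mul_catalanGF [CompleteSpace R] (hw : 4 * ‖w‖ ≤ 1) :
    2 * (2 * w * catalanGF w) - (2 * w * catalanGF w) ^ 2 = 4 * w := by
  set G := catalanGF w
  have hGw : G * w = w * G := ((Commute.refl w).catalanGF_right).symm.eq
  calc 2 * (2 * w * G) - (2 * w * G) ^ 2 = 4 * w * (G - w * G ^ 2) := by
        rw [sq, show (2 : R) * w * G * (2 * w * G) = 4 * (w * (G * w) * G) by noncomm_ring, hGw]
        noncomm_ring
    _ = 4 * w := by rw [sub_eq_iff_eq_add.2 (catalanGF_eq_one_add_mul_sq hw), mul_one]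

end CatalanGF

theorem spectralRadius_neg {𝕜 A : Type*} [NormedField 𝕜] [Ring A] [Algebra 𝕜 A] (a : A) :
    spectralRadius 𝕜 (-a) = spectralRadius 𝕜 a := by
  rw [spectralRadius, spectralRadius, ← spectrum.neg_eq, ← Set.image_neg_eq_neg, iSup_image]
  simp only [nnnorm_neg]

section SpectralRadius

variable {A : Type*} [NormedRing A]

theorem Commute.norm_add_pow_le {a b : A} (h : Commute a b) {Ma Mb r s : ℝ}
    (hMa : ∀ n, ‖a ^ n‖ ≤ Ma * r ^ n) (hMb : ∀ n, ‖b ^ n‖ ≤ Mb * s ^ n)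
    (n : ℕ) : ‖(a + b) ^ n‖ ≤ Ma * Mb * (r + s) ^ n := by
  rw [h.add_pow', _root_.add_pow, Finset.mul_sum, ← Finset.Nat.sum_antidiagonal_eq_sum_range_succ
    (fun i j => Ma * Mb * (r ^ i * s ^ j * n.choose i))]
  refine (norm_sum_le _ _).trans (Finset.sum_le_sum fun ij _ => ?_)
  calc ‖n.choose ij.1 • (a ^ ij.1 * b ^ ij.2)‖
      ≤ n.choose ij.1 * (‖a ^ ij.1‖ * ‖b ^ ij.2‖) :=
        norm_nsmul_le.trans (by gcongr; exact norm_mul_le _ _)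
    _ ≤ n.choose ij.1 * (Ma * r ^ ij.1 * (Mb * s ^ ij.2)) := by
        gcongr
        exacts [(norm_nonneg _).trans (hMa _), hMa _, hMb _]
    _ = Ma * Mb * (r ^ ij.1 * s ^ ij.2 * n.choose ij.1) := by ring

variable [NormedAlgebra ℂ A] [CompleteSpace A]

theorem spectralRadius_le_of_eventually_norm_pow_le {a : A} {K R : ℝ≥0}
    (h : ∀ᶠ n in atTop, ‖a ^ n‖ ≤ K * R ^ n) : spectralRadius ℂ a ≤ R := by
  refine (spectrum.spectralRadius_le_liminf_pow_nnnorm_pow_one_div ℂ a).trans ?_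
  refine ENNReal.le_of_forall_lt_one_mul_le fun ε hε => ?_
  rcases eq_or_ne ε 0 with rfl | hε0
  · simp
  have hbound : ∀ᶠ n : ℕ in atTop, (‖a ^ n‖₊ : ℝ≥0∞) ^ (1 / n : ℝ) ≤ ε⁻¹ * R := by
    filter_upwards [h, ENNReal.eventually_pow_one_div_le ENNReal.coe_ne_top
      (ENNReal.one_lt_inv.2 hε), eventually_ge_atTop 1] with n hn hK hn1
    have hn' : (‖a ^ n‖₊ : ℝ≥0∞) ≤ (K : ℝ≥0∞) * R ^ n := by exact_mod_cast hn
    calc (‖a ^ n‖₊ : ℝ≥0∞) ^ (1 / n : ℝ) ≤ ((K : ℝ≥0∞) * R ^ n) ^ (1 / n : ℝ) := by gcongr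
      _ = (K : ℝ≥0∞) ^ (1 / n : ℝ) * R := by
        rw [ENNReal.mul_rpow_of_nonneg _ _ (by positivity), one_div,
          ENNReal.pow_rpow_inv_natCast (by omega)]
      _ ≤ ε⁻¹ * R := by gcongr
  calc ε * atTop.liminf (fun n : ℕ => (‖a ^ n‖₊ : ℝ≥0∞) ^ (1 / n : ℝ))
      ≤ ε * (ε⁻¹ * R) := by gcongr; exact liminf_le_of_frequently_le' hbound.frequently
    _ = R := by
      rw [← mul_assoc, ENNReal.mul_inv_cancel hε0 (hε.trans ENNReal.one_lt_top).ne, one_mul]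

-- `spectrum.spectralRadius_le_nnnorm` needs `NormOneClass A`, which is not assumed here.
theorem spectralRadius_le_nnnorm' (a : A) : spectralRadius ℂ a ≤ ‖a‖₊ := by
  refine spectralRadius_le_of_eventually_norm_pow_le (K := 1) ?_
  filter_upwards [eventually_ge_atTop 1] with n hn
  simpa using norm_pow_le' a hn

theorem exists_norm_pow_le_of_spectralRadius_lt {a : A} {r : ℝ≥0} (h : spectralRadius ℂ a < r) :
    ∃ M : ℝ≥0, ∀ n, ‖a ^ n‖ ≤ M * r ^ n := by
  have hr : (r : ℝ) ≠ 0 := by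
    rintro hr
    simp [NNReal.coe_eq_zero.1 hr] at h
  have hev : ∀ᶠ n : ℕ in atTop, ‖a ^ n‖ ≤ 1 * ‖(r : ℝ) ^ n‖ := by
    filter_upwards [(spectrum.gelfand_formula a).eventually_lt_const h, eventually_ge_atTop 1]
      with n hn hn1
    have hle : (‖a ^ n‖₊ : ℝ≥0∞) ≤ (r : ℝ≥0∞) ^ n := by
      rw [← ENNReal.rpow_inv_natCast_pow (by omega : n ≠ 0) (‖a ^ n‖₊ : ℝ≥0∞), ← one_div]
      gcongr
    rw [one_mul, Real.norm_of_nonneg (by positivity)]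
    exact_mod_cast hle
  obtain ⟨M, hM⟩ := (Asymptotics.isBigO_nat_atTop_iff fun n hn => absurd hn (pow_ne_zero n hr)).1
    (Asymptotics.IsBigO.of_bound 1 hev)
  refine ⟨M.toNNReal, fun n => ?_⟩
  calc ‖a ^ n‖ ≤ M * ‖(r : ℝ) ^ n‖ := hM n
    _ ≤ M.toNNReal * r ^ n := by
      rw [Real.norm_of_nonneg (by positivity)]
      gcongr
      exact M.le_coe_toNNReal

theorem Commute.spectralRadius_add_le {a b : A} (h : Commute a b) :
    spectralRadius ℂ (a + b) ≤ spectralRadius ℂ a + spectralRadius ℂ b := by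
  have key : ∀ r s : ℝ≥0, spectralRadius ℂ a < r → spectralRadius ℂ b < s →
      spectralRadius ℂ (a + b) ≤ r + s := by
    intro r s hr hs
    obtain ⟨Ma, hMa⟩ := exists_norm_pow_le_of_spectralRadius_lt hr
    obtain ⟨Mb, hMb⟩ := exists_norm_pow_le_of_spectralRadius_lt hs
    exact_mod_cast spectralRadius_le_of_eventually_norm_pow_le (K := Ma * Mb)
      (.of_forall fun n => by exact_mod_cast h.norm_add_pow_le hMa hMb n)
  refine ENNReal.le_of_forall_pos_le_add fun ε hε _ => ?_
  have hε2 : (ε / 2 : ℝ≥0∞) ≠ 0 := by simpa using hε.ne'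
  obtain ⟨r, hr, hr'⟩ := ENNReal.lt_iff_exists_nnreal_btwn.1
    (ENNReal.lt_add_right ((spectralRadius_le_nnnorm' a).trans_lt ENNReal.coe_lt_top).ne hε2)
  obtain ⟨s, hs, hs'⟩ := ENNReal.lt_iff_exists_nnreal_btwn.1
    (ENNReal.lt_add_right ((spectralRadius_le_nnnorm' b).trans_lt ENNReal.coe_lt_top).ne hε2)
  calc spectralRadius ℂ (a + b) ≤ r + s := key r s hr hs
    _ ≤ spectralRadius ℂ a + ε / 2 + (spectralRadius ℂ b + ε / 2) := add_le_add hr'.le hs'.le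
    _ = spectralRadius ℂ a + spectralRadius ℂ b + ε := by
      rw [add_add_add_comm, ENNReal.add_halves]

theorem eq_of_two_mul_sub_sq_eq {b g : A} (hbg : Commute b g) (hb : spectralRadius ℂ b < 1)
    (hg : ‖g‖ ≤ 1) (h : 2 * b - b ^ 2 = 2 * g - g ^ 2) : b = g := by
  have hρ : spectralRadius ℂ (b + g) < ‖(2 : ℂ)‖₊ :=
    calc spectralRadius ℂ (b + g) ≤ spectralRadius ℂ b + spectralRadius ℂ g :=
          hbg.spectralRadius_add_le
      _ < 1 + 1 := by
          have hg' : spectralRadius ℂ g ≤ 1 :=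
            (spectralRadius_le_nnnorm' g).trans (by exact_mod_cast hg)
          exact ENNReal.add_lt_add_of_lt_of_le (hg'.trans_lt ENNReal.one_lt_top).ne hb hg'
      _ = ‖(2 : ℂ)‖₊ := by norm_num
  have hunit : IsUnit (2 - (b + g)) := by
    have h2 := spectrum.mem_resolventSet_iff.1 (spectrum.mem_resolventSet_of_spectralRadius_lt hρ)
    rwa [map_ofNat] at h2
  have hfac : (b - g) * (2 - (b + g)) = 0 := by
    rw [show (b - g) * (2 - (b + g)) = (2 * b - b ^ 2) - (2 * g - g ^ 2) + (g * b - b * g) by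
      noncomm_ring, hbg.eq, h, sub_self, sub_self, add_zero]
  exact sub_eq_zero.1 (hunit.mul_left_eq_zero.1 hfac)

theorem norm_sub_one_le_of_add_one_eq_two_mul_mul {a c : A} (hac : c + 1 = 2 * a * a)
    (hρ : spectralRadius ℂ (a - 1) < 1) (hc : ‖c - 1‖ ≤ 2) :
    ‖a - 1‖ ≤ 1 - √(1 - ‖c - 1‖ / 2) := by
  have h4w : 4 * ((8⁻¹ : ℂ) • (1 - c)) = 1 - a * a := by
    have h2 : 1 - c = (2 : ℂ) • (1 - a * a) := by
      rw [eq_sub_of_add_eq hac, two_smul]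
      noncomm_ring
    rw [h2, smul_smul, ← Nat.ofNat_nsmul_eq_mul, ← ofNat_smul_eq_nsmul ℂ, smul_smul]
    norm_num
  set w : A := (8⁻¹ : ℂ) • (1 - c)
  have hw : 4 * ‖w‖ = ‖c - 1‖ / 2 := by
    rw [norm_smul, norm_sub_rev]
    norm_num
    ring
  have hw4 : 4 * ‖w‖ ≤ 1 := by rw [hw]; linarith
  set g := 2 * w * catalanGF w
  have hg : ‖g‖ ≤ 1 - √(1 - ‖c - 1‖ / 2) := hw ▸ norm_two_mul_mul_catalanGF_le hw4
  have hag : 1 - a = g := by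
    refine eq_of_two_mul_sub_sq_eq ?_ ?_ (hg.trans ?_) ?_
    · have hac' : Commute a c := by
        rw [eq_sub_of_add_eq hac]
        exact (((Commute.ofNat_right a 2).mul_right (.refl a)).mul_right (.refl a)).sub_right
          (.one_right a)
      have hbw : Commute (1 - a) w := ((Commute.one_left _).sub_left
        ((Commute.one_right a).sub_right hac')).smul_right _
      exact ((Commute.ofNat_right _ 2).mul_right hbw).mul_right hbw.catalanGF_right
    · rwa [← neg_sub, spectralRadius_neg]
    · exact sub_le_self _ (Real.sqrt_nonneg _)
    · rw [two_mul_sub_sq_two_mul_mul_catalanGF hw4, h4w]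
      noncomm_ring
  rw [← norm_neg, neg_sub, hag]
  exact hg

end SpectralRadius

theorem explicit_convergence_control_general {A : Type*} [NormedRing A]
    [NormedAlgebra ℂ A] [CompleteSpace A] (C : ℝ → A)
    (hC : IsCosineFunction C) (η : ℝ)
    (h : ∀ t : ℝ, |t| ≤ η →
      ‖C t - 1‖ ≤ 2 ∧ spectralRadius ℂ (C (t / 2) - 1) < 1)
    (u : ℕ → ℝ) (hu0 : u 0 = 2)
    (hurec : ∀ n : ℕ, u (n + 1) = 1 - Real.sqrt (1 - u n / 2)) :
    ∀ n : ℕ, 1 ≤ n → ∀ t : ℝ, |t| ≤ η / 2 ^ n → ‖C t - 1‖ ≤ u n := by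
  suffices ∀ n : ℕ, ∀ t : ℝ, |t| ≤ η / 2 ^ n → ‖C t - 1‖ ≤ u n from fun n _ => this n
  intro n
  induction n with
  | zero =>
    intro t ht
    simpa [hu0] using (h t (by simpa using ht)).1
  | succ n ih =>
    intro t ht
    have h2t : |2 * t| ≤ η / 2 ^ n := by
      rw [pow_succ, ← div_div] at ht
      rw [abs_mul, abs_two]
      linarith
    have h2tη : |2 * t| ≤ η := by
      rw [le_div_iff₀ (by positivity)] at h2t
      exact (le_mul_of_one_le_right (abs_nonneg _) (one_le_pow₀ one_le_two)).trans h2t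
    obtain ⟨hnorm, hρ⟩ := h (2 * t) h2tη
    rw [mul_div_cancel_left₀ t two_ne_zero] at hρ
    have hdouble : C (2 * t) + 1 = 2 * C t * C t := by
      simpa [two_mul, hC.1] using hC.2 t t
    calc ‖C t - 1‖ ≤ 1 - √(1 - ‖C (2 * t) - 1‖ / 2) :=
          norm_sub_one_le_of_add_one_eq_two_mul_mul hdouble hρ hnorm
      _ ≤ 1 - √(1 - u n / 2) := by gcongr; exact ih _ h2t
      _ = u (n + 1) := (hurec n).symm

theorem explicit_convergence_control {A : Type*} [NormedRing A]
    [NormedAlgebra ℂ A] [CompleteSpace A] (C : ℝ → A)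
    (hC : IsCosineFunction C) (η : ℝ) (hη : 0 < η)
    (h : ∀ t : ℝ, |t| ≤ η →
      ‖C t - 1‖ ≤ 2 ∧ spectralRadius ℂ (C (t / 2) - 1) < 1)
    (u : ℕ → ℝ) (hu0 : u 0 = 2)
    (hurec : ∀ n : ℕ, u (n + 1) = 1 - Real.sqrt (1 - u n / 2)) :
    ∀ n : ℕ, 1 ≤ n → ∀ t : ℝ, |t| ≤ η / 2 ^ n → ‖C t - 1‖ ≤ u n :=
  explicit_convergence_control_general C hC η h u hu0 hurec
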